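/- For every λ with 0 < λ ≤ 1, the function z ↦ E(z,λ) attains its infimum over ℝ at some point ζ(λ) > 0; that is, there exists ζ > 0 such that E(ζ,λ) ≤ E(z,λ) for all z ∈ ℝ. -/

import Mathlib

open MeasureTheory Set Real Filter

noncomputable section

/-- Membership in the space `B¹(ℝ⁺)`: square integrable on `(0,∞)`, with square
integrable derivative and such that `t ↦ t·φ(t)` is square integrable. -/
def MemB1 (φ : ℝ → ℝ) : Prop :=
  ContinuousWithinAt φ (Ici 0) 0 ∧
  (∀ t ∈ Ioi (0:ℝ), DifferentiableAt ℝ φ t) ∧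
  IntegrableOn (fun t => (φ t) ^ 2) (Ioi 0) ∧
  IntegrableOn (fun t => (deriv φ t) ^ 2) (Ioi 0) ∧
  IntegrableOn (fun t => (t * φ t) ^ 2) (Ioi 0)

/-- The Rayleigh quotient of the de Gennes operator `-d²/dt² + (t-ξ)²`
(Neumann realization on `L²((0,∞))`). -/
def RQ (ξ : ℝ) (φ : ℝ → ℝ) : ℝ :=
  (∫ t in Ioi (0:ℝ), ((deriv φ t) ^ 2 + (t - ξ) ^ 2 * (φ t) ^ 2)) /
  (∫ t in Ioi (0:ℝ), (φ t) ^ 2)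

/-- The ground state energy `μ₁(ξ)` of the de Gennes operator. -/
def mu1 (ξ : ℝ) : ℝ :=
  sInf {r | ∃ φ, MemB1 φ ∧ (0 < ∫ t in Ioi (0:ℝ), (φ t) ^ 2) ∧ r = RQ ξ φ}

/-- `Θ₀ = inf_ξ μ₁(ξ)`. -/
def Theta0 : ℝ := sInf (Set.range mu1)

/-- The Ginzburg–Landau type functional `F_{z,λ}`. -/
def GLF (z lam : ℝ) (φ : ℝ → ℝ) : ℝ :=
  ∫ t in Ioi (0:ℝ),
    ((deriv φ t) ^ 2 + (t - z) ^ 2 * (φ t) ^ 2 + lam / 2 * (φ t) ^ 4 - lam * (φ t) ^ 2)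

/-- `f` minimizes `F_{z,λ}` over `B¹(ℝ⁺)`. -/
def IsMinimizer (z lam : ℝ) (f : ℝ → ℝ) : Prop :=
  MemB1 f ∧ ∀ φ, MemB1 φ → GLF z lam f ≤ GLF z lam φ

/-- The ground state energy `E(z,λ) = inf F_{z,λ}` over `B¹(ℝ⁺)`. -/
def Einf (lam z : ℝ) : ℝ := sInf {r | ∃ φ, MemB1 φ ∧ r = GLF z lam φ}

/-!
For `0 < λ ≤ 1` the function `E(·, λ)` is `≤ 0` (take `φ = 0`), and a function `φ` with
`F_{z,λ}(φ) < 0` satisfies `∫ φ² ≤ 9/λ` and `∫ (t-z)² φ² ≤ 9`, because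
`λ/2 φ⁴ - 3λ/2 φ² + ½ (t-z)² φ² ≥ -9/8` near `t = z` and is `≥ 0` away from it. Since
`F_{z',λ}(φ) - F_{z,λ}(φ) = ∫ ((t-z')² - (t-z)²) φ²`, these bounds make `E(·, λ)` locally
Lipschitz.

Completing the square with the weight `w(t) = |t - z/2| - z/2`, which is the harmonic-oscillator
weight `t - z` on `[z/2, ∞)` and satisfies `w(0) ≥ 0`,
`0 ≤ ∫ (φ' + wφ)² = ∫ φ'² + (w² - w') φ² - w(0) φ(0)²` gives
`∫ φ² ≤ ∫ φ'² + (t-z)² φ² + 2 ∫_{(0,z/2)} φ²`. As `λ ≤ 1`, the energy is therefore at least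
`-2 ∫_{(0,z/2)} φ²`: this is `0` for `z ≤ 0`, and at most `72/z²` in absolute value for a
function of negative energy, because `(t-z)² ≥ z²/4` on `(0, z/2)`. Hence `E(z, λ) = 0` for
`z ≤ 0` and `E(z, λ) → 0` as `z → ∞`, so a negative value of `E(·, λ)` forces a global minimum,
attained at some `z > 0`; if there is none, `E(·, λ) ≡ 0`.
-/

open Topology

theorem integral_Ioi_eq_neg_of_hasDerivAt_off_countable {E : Type*} [NormedAddCommGroup E]
    [NormedSpace ℝ E] [CompleteSpace E] {F F' : ℝ → E} {a : ℝ} {s : Set ℝ}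
    (hs : s.Countable) (hsb : BddAbove s) (hcont : ContinuousOn F (Ici a))
    (hderiv : ∀ x ∈ Ioi a \ s, HasDerivAt F (F' x) x)
    (hF' : IntegrableOn F' (Ioi a)) (hF : IntegrableOn F (Ioi a)) :
    ∫ x in Ioi a, F' x = -F a := by
  obtain ⟨b, hb⟩ := hsb
  have hlim : Tendsto F atTop (𝓝 0) := by
    refine tendsto_zero_of_hasDerivAt_of_integrableOn_Ioi (a := max a b) (fun x hx => ?_)
      (hF'.mono_set (Ioi_subset_Ioi (le_max_left _ _)))
      (hF.mono_set (Ioi_subset_Ioi (le_max_left _ _)))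
    have hx : max a b < x := hx
    exact hderiv x ⟨(le_max_left a b).trans_lt hx,
      fun hxs => (hb hxs).not_gt ((le_max_right a b).trans_lt hx)⟩
  have hftc : (fun y => F y - F a) =ᶠ[atTop] fun y => ∫ x in a..y, F' x := by
    filter_upwards [eventually_ge_atTop a] with y hy
    exact (integral_eq_of_hasDerivAt_off_countable_of_le F F' hy hs
      (hcont.mono Icc_subset_Ici_self) (fun x hx => hderiv x ⟨hx.1.1, hx.2⟩)
      ((intervalIntegrable_iff_integrableOn_Ioc_of_le hy).2
        (hF'.mono_set Ioc_subset_Ioi_self))).symm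
  have := tendsto_nhds_unique (intervalIntegral_tendsto_integral_Ioi a hF' tendsto_id)
    ((hlim.sub_const (F a)).congr' hftc)
  rw [this, zero_sub]

theorem setIntegral_indicator_Ioo_const_le {c a b : ℝ} (hc : 0 ≤ c) (hab : a ≤ b) (s : Set ℝ) :
    ∫ t in s, (Ioo a b).indicator (fun _ => c) t ≤ c * (b - a) := by
  have hi : Integrable ((Ioo a b).indicator fun _ => c) :=
    (integrableOn_const measure_Ioo_lt_top.ne).integrable_indicator measurableSet_Ioo
  calc ∫ t in s, (Ioo a b).indicator (fun _ => c) t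
      ≤ ∫ t, (Ioo a b).indicator (fun _ => c) t :=
        setIntegral_le_integral hi (ae_of_all _ (indicator_nonneg fun _ _ => hc))
    _ = c * (b - a) := by
        rw [integral_indicator measurableSet_Ioo, setIntegral_const,
          Real.volume_real_Ioo_of_le hab, smul_eq_mul, mul_comm]

theorem exists_pos_forall_le_of_tendsto_atTop {f : ℝ → ℝ} (hf : Continuous f)
    (hle : ∀ z, f z ≤ 0) (hnonneg : ∀ z ≤ 0, 0 ≤ f z) (hlim : Tendsto f atTop (𝓝 0)) :
    ∃ ζ, 0 < ζ ∧ ∀ z, f ζ ≤ f z := by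
  by_cases hneg : ∃ z₀, f z₀ < 0
  · obtain ⟨z₀, hz₀⟩ := hneg
    have hcocompact : ∀ᶠ z in cocompact ℝ, f z₀ ≤ f z := by
      rw [cocompact_eq_atBot_atTop, eventually_sup]
      exact ⟨(eventually_le_atBot 0).mono fun z hz => hz₀.le.trans (hnonneg z hz),
        hlim.eventually (eventually_ge_nhds hz₀)⟩
    obtain ⟨ζ, hζ⟩ := hf.exists_forall_le' z₀ hcocompact
    exact ⟨ζ, not_le.1 fun hζ0 => (hnonneg ζ hζ0).not_gt ((hζ z₀).trans_lt hz₀), hζ⟩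
  · simp only [not_exists, not_lt] at hneg
    exact ⟨1, one_pos, fun z => (hle 1).trans (hneg z)⟩

namespace MemB1

variable {φ : ℝ → ℝ}

theorem continuousOn (h : MemB1 φ) : ContinuousOn φ (Ici 0) := by
  intro t ht
  rcases (mem_Ici.1 ht).eq_or_lt with rfl | ht
  · exact h.1
  · exact (h.2.1 t ht).continuousAt.continuousWithinAt

theorem hasDerivAt (h : MemB1 φ) {t : ℝ} (ht : 0 < t) : HasDerivAt φ (deriv φ t) t :=
  (h.2.1 t ht).hasDerivAt

theorem integrableOn_sq (h : MemB1 φ) : IntegrableOn (fun t => φ t ^ 2) (Ioi 0) := h.2.2.1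

theorem integrableOn_deriv_sq (h : MemB1 φ) :
    IntegrableOn (fun t => deriv φ t ^ 2) (Ioi 0) := h.2.2.2.1

theorem aestronglyMeasurable (h : MemB1 φ) :
    AEStronglyMeasurable φ (volume.restrict (Ioi 0)) :=
  (h.continuousOn.mono Ioi_subset_Ici_self).aestronglyMeasurable measurableSet_Ioi

theorem integrableOn_mul_sq (h : MemB1 φ) {p : ℝ → ℝ} (hp : Measurable p) {A B : ℝ}
    (hpb : ∀ t, |p t| ≤ A + B * t ^ 2) : IntegrableOn (fun t => p t * φ t ^ 2) (Ioi 0) := by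
  refine Integrable.mono' ((h.integrableOn_sq.const_mul A).add (h.2.2.2.2.const_mul B))
    (hp.aestronglyMeasurable.mul (h.aestronglyMeasurable.pow 2)) (ae_of_all _ fun t => ?_)
  rw [norm_mul, norm_pow, Real.norm_eq_abs, Real.norm_eq_abs, sq_abs]
  calc |p t| * φ t ^ 2 ≤ (A + B * t ^ 2) * φ t ^ 2 := by gcongr; exact hpb t
    _ = A * φ t ^ 2 + B * (t * φ t) ^ 2 := by ring

theorem integrableOn_potential (h : MemB1 φ) (z : ℝ) :
    IntegrableOn (fun t => (t - z) ^ 2 * φ t ^ 2) (Ioi 0) :=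
  h.integrableOn_mul_sq (by fun_prop) (A := 2 * z ^ 2) (B := 2) fun t => by
    rw [abs_sq]; nlinarith [sq_nonneg (t + z)]

theorem integrableOn_mul_mul_deriv (h : MemB1 φ) {p : ℝ → ℝ} (hp : Measurable p) {A B : ℝ}
    (hpb : ∀ t, |p t| ≤ A + B * |t|) :
    IntegrableOn (fun t => p t * φ t * deriv φ t) (Ioi 0) := by
  have hp2 : IntegrableOn (fun t => p t ^ 2 * φ t ^ 2) (Ioi 0) :=
    h.integrableOn_mul_sq (hp.pow_const 2) (A := 2 * A ^ 2) (B := 2 * B ^ 2) fun t => by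
      have : p t ^ 2 ≤ (A + B * |t|) ^ 2 := by rw [← sq_abs]; gcongr; exact hpb t
      rw [abs_sq]; nlinarith [sq_nonneg (A - B * |t|), sq_abs t]
  refine Integrable.mono' ((hp2.add h.integrableOn_deriv_sq).div_const 2)
    ((hp.aestronglyMeasurable.mul h.aestronglyMeasurable).mul
      (measurable_deriv φ).aestronglyMeasurable) (ae_of_all _ fun t => ?_)
  rw [Real.norm_eq_abs, abs_mul, Pi.add_apply, ← mul_pow]
  nlinarith [two_mul_le_add_sq |p t * φ t| |deriv φ t|, sq_abs (p t * φ t), sq_abs (deriv φ t)]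

end MemB1

section Energy

variable {φ : ℝ → ℝ} {z lam : ℝ}

theorem integrableOn_glf_integrand (h : MemB1 φ) (hq : IntegrableOn (fun t => φ t ^ 4) (Ioi 0)) :
    IntegrableOn (fun t => deriv φ t ^ 2 + (t - z) ^ 2 * φ t ^ 2 + lam / 2 * φ t ^ 4
      - lam * φ t ^ 2) (Ioi 0) :=
  ((h.integrableOn_deriv_sq.add (h.integrableOn_potential z)).add (hq.const_mul _)).sub
    (h.integrableOn_sq.const_mul _)

theorem glf_eq (h : MemB1 φ) (hq : IntegrableOn (fun t => φ t ^ 4) (Ioi 0)) :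
    GLF z lam φ = (∫ t in Ioi 0, deriv φ t ^ 2) + (∫ t in Ioi 0, (t - z) ^ 2 * φ t ^ 2)
      + lam / 2 * (∫ t in Ioi 0, φ t ^ 4) - lam * ∫ t in Ioi 0, φ t ^ 2 := by
  have hK := h.integrableOn_deriv_sq
  have hW := h.integrableOn_potential z
  have hKW : IntegrableOn (fun t => deriv φ t ^ 2 + (t - z) ^ 2 * φ t ^ 2) (Ioi 0) := hK.add hW
  have hKWQ : IntegrableOn
      (fun t => deriv φ t ^ 2 + (t - z) ^ 2 * φ t ^ 2 + lam / 2 * φ t ^ 4) (Ioi 0) :=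
    hKW.add (hq.const_mul _)
  rw [GLF, integral_sub hKWQ (h.integrableOn_sq.const_mul _),
    integral_add hKW (hq.const_mul _), integral_add hK hW, integral_const_mul,
    integral_const_mul]

/-- `GLF` is a Bochner integral, hence `0` when the quartic term is not integrable. -/
theorem glf_eq_zero (h : MemB1 φ) (hlam : lam ≠ 0)
    (hq : ¬ IntegrableOn (fun t => φ t ^ 4) (Ioi 0)) : GLF z lam φ = 0 := by
  refine integral_undef fun hi => hq ?_
  have := ((hi.sub (h.integrableOn_deriv_sq.add (h.integrableOn_potential z))).add
    (h.integrableOn_sq.const_mul lam)).const_mul (2 / lam)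
  refine IntegrableOn.congr_fun this (fun t _ => ?_) measurableSet_Ioi
  simp only [Pi.add_apply, Pi.sub_apply]
  field_simp
  ring

theorem integrableOn_pow_four_of_glf_ne_zero (h : MemB1 φ) (hlam : lam ≠ 0)
    (hne : GLF z lam φ ≠ 0) : IntegrableOn (fun t => φ t ^ 4) (Ioi 0) :=
  not_not.1 fun hq => hne (glf_eq_zero h hlam hq)

theorem glf_integrand_ge (hlam0 : 0 ≤ lam) (hlam1 : lam ≤ 1) (t : ℝ) :
    lam / 2 * φ t ^ 2 + 1 / 2 * ((t - z) ^ 2 * φ t ^ 2)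
        - (Ioo (z - 2) (z + 2)).indicator (fun _ => (9 / 8 : ℝ)) t
      ≤ deriv φ t ^ 2 + (t - z) ^ 2 * φ t ^ 2 + lam / 2 * φ t ^ 4 - lam * φ t ^ 2 := by
  by_cases ht : t ∈ Ioo (z - 2) (z + 2)
  · rw [indicator_of_mem ht]
    nlinarith [sq_nonneg (deriv φ t), mul_nonneg (sq_nonneg (t - z)) (sq_nonneg (φ t)),
      mul_nonneg hlam0 (sq_nonneg (φ t ^ 2 - 3 / 2))]
  · rw [indicator_of_notMem ht]
    have hfar : 4 ≤ (t - z) ^ 2 := by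
      rw [mem_Ioo, not_and_or, not_lt, not_lt] at ht
      rcases ht with ht | ht <;> nlinarith
    nlinarith [sq_nonneg (deriv φ t), mul_nonneg hlam0 (pow_nonneg (sq_nonneg (φ t)) 2),
      mul_nonneg (sub_nonneg.2 hfar) (sq_nonneg (φ t)), sq_nonneg (φ t)]

theorem mass_add_potential_le_glf (h : MemB1 φ) (hlam0 : 0 ≤ lam) (hlam1 : lam ≤ 1)
    (hq : IntegrableOn (fun t => φ t ^ 4) (Ioi 0)) :
    lam / 2 * (∫ t in Ioi 0, φ t ^ 2) + 1 / 2 * (∫ t in Ioi 0, (t - z) ^ 2 * φ t ^ 2)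
      ≤ GLF z lam φ + 9 / 2 := by
  have hA := h.integrableOn_sq.const_mul (lam / 2)
  have hW := (h.integrableOn_potential z).const_mul (1 / 2)
  have hAW : IntegrableOn (fun t => lam / 2 * φ t ^ 2 + 1 / 2 * ((t - z) ^ 2 * φ t ^ 2))
    (Ioi 0) := hA.add hW
  have hg : IntegrableOn ((Ioo (z - 2) (z + 2)).indicator fun _ => (9 / 8 : ℝ)) (Ioi 0) :=
    ((integrableOn_const measure_Ioo_lt_top.ne).integrable_indicator measurableSet_Ioo).integrableOn
  have hmono : ∫ t in Ioi 0, (lam / 2 * φ t ^ 2 + 1 / 2 * ((t - z) ^ 2 * φ t ^ 2)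
      - (Ioo (z - 2) (z + 2)).indicator (fun _ => (9 / 8 : ℝ)) t) ≤ GLF z lam φ :=
    setIntegral_mono_on (hAW.sub hg) (integrableOn_glf_integrand h hq) measurableSet_Ioi
      fun t _ => glf_integrand_ge hlam0 hlam1 t
  rw [integral_sub hAW hg, integral_add hA hW, integral_const_mul, integral_const_mul] at hmono
  linarith [setIntegral_indicator_Ioo_const_le (by norm_num : (0 : ℝ) ≤ 9 / 8)
    (by linarith : z - 2 ≤ z + 2) (Ioi 0)]

theorem neg_le_glf (h : MemB1 φ) (hlam0 : 0 < lam) (hlam1 : lam ≤ 1) :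
    -(9 / 2) ≤ GLF z lam φ := by
  by_cases hq : IntegrableOn (fun t => φ t ^ 4) (Ioi 0)
  · have hA : 0 ≤ ∫ t in Ioi 0, φ t ^ 2 :=
      setIntegral_nonneg measurableSet_Ioi fun t _ => sq_nonneg _
    have hW : 0 ≤ ∫ t in Ioi 0, (t - z) ^ 2 * φ t ^ 2 :=
      setIntegral_nonneg measurableSet_Ioi fun t _ => by positivity
    have := mass_add_potential_le_glf (z := z) h hlam0.le hlam1 hq
    nlinarith
  · rw [glf_eq_zero h hlam0.ne' hq]
    norm_num

theorem mass_le_of_glf_neg (h : MemB1 φ) (hlam0 : 0 < lam) (hlam1 : lam ≤ 1)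
    (hneg : GLF z lam φ < 0) : ∫ t in Ioi 0, φ t ^ 2 ≤ 9 / lam := by
  have hW : 0 ≤ ∫ t in Ioi 0, (t - z) ^ 2 * φ t ^ 2 :=
    setIntegral_nonneg measurableSet_Ioi fun t _ => by positivity
  have := mass_add_potential_le_glf (z := z) h hlam0.le hlam1
    (integrableOn_pow_four_of_glf_ne_zero h hlam0.ne' hneg.ne)
  rw [le_div_iff₀ hlam0]
  linarith

theorem potential_le_of_glf_neg (h : MemB1 φ) (hlam0 : 0 < lam) (hlam1 : lam ≤ 1)
    (hneg : GLF z lam φ < 0) : ∫ t in Ioi 0, (t - z) ^ 2 * φ t ^ 2 ≤ 9 := by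
  have hA : 0 ≤ ∫ t in Ioi 0, φ t ^ 2 :=
    setIntegral_nonneg measurableSet_Ioi fun t _ => sq_nonneg _
  have := mass_add_potential_le_glf (z := z) h hlam0.le hlam1
    (integrableOn_pow_four_of_glf_ne_zero h hlam0.ne' hneg.ne)
  nlinarith

theorem memB1_zero : MemB1 fun _ => 0 :=
  ⟨continuousWithinAt_const, fun _ _ => differentiableAt_const 0, by simp, by simp, by simp⟩

theorem glf_zero : GLF z lam (fun _ => 0) = 0 := by
  simp [GLF]

theorem glf_values_nonempty : {r | ∃ φ, MemB1 φ ∧ r = GLF z lam φ}.Nonempty :=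
  ⟨0, _, memB1_zero, glf_zero.symm⟩

theorem einf_le_glf (hlam0 : 0 < lam) (hlam1 : lam ≤ 1) (h : MemB1 φ) :
    Einf lam z ≤ GLF z lam φ :=
  csInf_le ⟨-(9 / 2), fun _ ⟨_, hψ, hr⟩ => hr ▸ neg_le_glf hψ hlam0 hlam1⟩ ⟨φ, h, rfl⟩

theorem le_einf {c : ℝ} (hc : ∀ φ, MemB1 φ → c ≤ GLF z lam φ) : c ≤ Einf lam z :=
  le_csInf glf_values_nonempty fun _ ⟨φ, h, hr⟩ => hr ▸ hc φ h

theorem einf_nonpos (hlam0 : 0 < lam) (hlam1 : lam ≤ 1) : Einf lam z ≤ 0 :=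
  glf_zero (z := z) (lam := lam) ▸ einf_le_glf hlam0 hlam1 memB1_zero

theorem exists_glf_lt_of_einf_lt {r : ℝ} (hr : Einf lam z < r) :
    ∃ φ, MemB1 φ ∧ GLF z lam φ < r := by
  obtain ⟨_, ⟨φ, h, rfl⟩, hlt⟩ := exists_lt_of_csInf_lt glf_values_nonempty hr
  exact ⟨φ, h, hlt⟩

theorem sq_sub_le_sq_sub_add (t : ℝ) {z z' : ℝ} (hz' : |z' - z| ≤ 1) :
    (t - z') ^ 2 ≤ (t - z) ^ 2 + |z' - z| * (2 + (t - z) ^ 2) := by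
  have hd : (z' - z) ^ 2 ≤ |z' - z| := by
    rw [← sq_abs]; nlinarith [abs_nonneg (z' - z)]
  have hud : -(2 * (t - z) * (z' - z)) ≤ |z' - z| * (1 + (t - z) ^ 2) := by
    have := neg_abs_le (2 * (t - z) * (z' - z))
    rw [abs_mul, abs_mul, abs_two] at this
    nlinarith [mul_nonneg (abs_nonneg (z' - z)) (sq_nonneg (|t - z| - 1)), sq_abs (t - z)]
  nlinarith

theorem glf_le_glf_add (h : MemB1 φ) (hlam0 : 0 < lam) (hlam1 : lam ≤ 1)
    (hneg : GLF z lam φ < 0) {z' : ℝ} (hz' : |z' - z| ≤ 1) :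
    GLF z' lam φ ≤ GLF z lam φ + 27 / lam * |z' - z| := by
  have hq := integrableOn_pow_four_of_glf_ne_zero h hlam0.ne' hneg.ne
  have hA := mass_le_of_glf_neg h hlam0 hlam1 hneg
  have hW := potential_le_of_glf_neg h hlam0 hlam1 hneg
  have hWi := h.integrableOn_potential z
  have hBi : IntegrableOn (fun t => |z' - z| * (2 * φ t ^ 2 + (t - z) ^ 2 * φ t ^ 2)) (Ioi 0) :=
    ((h.integrableOn_sq.const_mul 2).add hWi).const_mul _
  have hmono : ∫ t in Ioi 0, (t - z') ^ 2 * φ t ^ 2 ≤ ∫ t in Ioi 0,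
      ((t - z) ^ 2 * φ t ^ 2 + |z' - z| * (2 * φ t ^ 2 + (t - z) ^ 2 * φ t ^ 2)) :=
    setIntegral_mono_on (h.integrableOn_potential z') (hWi.add hBi) measurableSet_Ioi
      fun t _ => by nlinarith [sq_sub_le_sq_sub_add t hz', sq_nonneg (φ t)]
  rw [integral_add hWi hBi, integral_const_mul, integral_add (h.integrableOn_sq.const_mul 2) hWi,
    integral_const_mul] at hmono
  have h9 : 9 ≤ 9 / lam := by rw [le_div_iff₀ hlam0]; nlinarith
  have hB : |z' - z| * (2 * (∫ t in Ioi 0, φ t ^ 2) + ∫ t in Ioi 0, (t - z) ^ 2 * φ t ^ 2)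
      ≤ 27 / lam * |z' - z| := by
    rw [mul_comm]
    refine mul_le_mul_of_nonneg_right ?_ (abs_nonneg _)
    linarith [show 27 / lam = 2 * (9 / lam) + 9 / lam by ring]
  rw [glf_eq h hq, glf_eq h hq]
  linarith

theorem einf_le_einf_add (hlam0 : 0 < lam) (hlam1 : lam ≤ 1) {z' : ℝ} (hz' : |z' - z| ≤ 1) :
    Einf lam z' ≤ Einf lam z + 27 / lam * |z' - z| := by
  have hL : 0 ≤ 27 / lam * |z' - z| := by positivity
  rcases (einf_nonpos (z := z) hlam0 hlam1).eq_or_lt with hzero | hneg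
  · linarith [einf_nonpos (z := z') hlam0 hlam1]
  refine le_of_forall_pos_lt_add fun ε hε => ?_
  obtain ⟨φ, h, hφ⟩ := exists_glf_lt_of_einf_lt (lt_min (lt_add_of_pos_right _ hε) hneg)
  calc Einf lam z' ≤ GLF z' lam φ := einf_le_glf hlam0 hlam1 h
    _ ≤ GLF z lam φ + 27 / lam * |z' - z| :=
        glf_le_glf_add h hlam0 hlam1 (hφ.trans_le (min_le_right _ _)) hz'
    _ < Einf lam z + 27 / lam * |z' - z| + ε := by linarith [min_le_left (Einf lam z + ε) 0]

theorem continuous_einf (hlam0 : 0 < lam) (hlam1 : lam ≤ 1) : Continuous (Einf lam) := by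
  refine LocallyLipschitz.continuous fun z => ⟨(27 / lam).toNNReal, Metric.ball z (1 / 2),
    Metric.ball_mem_nhds z (by norm_num), LipschitzOnWith.of_dist_le_mul fun x hx y hy => ?_⟩
  have hxy : |x - y| ≤ 1 := by
    rw [Metric.mem_ball, Real.dist_eq] at hx hy
    linarith [abs_sub_le x z y, abs_sub_comm y z]
  rw [Real.coe_toNNReal _ (by positivity), Real.dist_eq, Real.dist_eq, abs_le]
  constructor
  · have := einf_le_einf_add (z := x) hlam0 hlam1 (abs_sub_comm x y ▸ hxy)
    rw [abs_sub_comm] at this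
    linarith
  · linarith [einf_le_einf_add (z := y) hlam0 hlam1 hxy]

end Energy

def oscWeight (z t : ℝ) : ℝ := |t - z / 2| - z / 2

def oscWeightDeriv (z t : ℝ) : ℝ := if t < z / 2 then -1 else 1

theorem hasDerivAt_oscWeight {z t : ℝ} (ht : t ≠ z / 2) :
    HasDerivAt (oscWeight z) (oscWeightDeriv z t) t := by
  unfold oscWeight oscWeightDeriv
  rcases ht.lt_or_gt with h | h
  · simpa [h] using ((hasDerivAt_abs_neg (sub_neg.2 h)).comp t
      ((hasDerivAt_id t).sub_const (z / 2))).sub_const (z / 2)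
  · simpa [h.not_gt] using ((hasDerivAt_abs_pos (sub_pos.2 h)).comp t
      ((hasDerivAt_id t).sub_const (z / 2))).sub_const (z / 2)

theorem continuous_oscWeight (z : ℝ) : Continuous (oscWeight z) := by
  unfold oscWeight; fun_prop

theorem measurable_oscWeightDeriv (z : ℝ) : Measurable (oscWeightDeriv z) :=
  Measurable.ite measurableSet_Iio measurable_const measurable_const

theorem abs_oscWeight_le (z t : ℝ) : |oscWeight z t| ≤ |z| + |t| := by
  unfold oscWeight
  have hz : |z / 2| = |z| / 2 := by rw [abs_div, abs_two]
  linarith [abs_sub (|t - z / 2|) (z / 2), abs_sub t (z / 2), abs_abs (t - z / 2)]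

theorem abs_oscWeightDeriv_le (z t : ℝ) : |oscWeightDeriv z t| ≤ 1 := by
  unfold oscWeightDeriv; split_ifs <;> simp

theorem oscWeight_zero_nonneg (z : ℝ) : 0 ≤ oscWeight z 0 := by
  rw [oscWeight, zero_sub, abs_neg, sub_nonneg]
  exact le_abs_self _

/-- With `w = oscWeight z`, the right-hand side is `(φ' + wφ)² + c φ²`, where
`c = z (z - 2t) ≥ 0` on `(0, z/2)` and `c = 0` elsewhere. -/
theorem oscillator_integrand_nonneg (φ : ℝ → ℝ) (z : ℝ) {t : ℝ} (ht : 0 < t) :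
    0 ≤ deriv φ t ^ 2 + (t - z) ^ 2 * φ t ^ 2 - φ t ^ 2
      + 2 * (Ioo 0 (z / 2)).indicator (fun t => φ t ^ 2) t
      + (oscWeightDeriv z t * φ t ^ 2 + 2 * (oscWeight z t * φ t * deriv φ t)) := by
  unfold oscWeight oscWeightDeriv
  by_cases hta : t < z / 2
  · rw [indicator_of_mem (show t ∈ Ioo 0 (z / 2) from ⟨ht, hta⟩), if_pos hta,
      abs_of_neg (sub_neg.2 hta)]
    have : 0 ≤ z * (z - 2 * t) := mul_nonneg (by linarith) (by linarith)
    nlinarith [sq_nonneg (deriv φ t - t * φ t), mul_nonneg this (sq_nonneg (φ t))]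
  · rw [indicator_of_notMem fun hmem => hta hmem.2, if_neg hta,
      abs_of_nonneg (sub_nonneg.2 (not_lt.1 hta))]
    nlinarith [sq_nonneg (deriv φ t + (t - z) * φ t)]

namespace MemB1

variable {φ : ℝ → ℝ}

theorem integrableOn_oscWeight_mul_sq (h : MemB1 φ) (z : ℝ) :
    IntegrableOn (fun t => oscWeight z t * φ t ^ 2) (Ioi 0) :=
  h.integrableOn_mul_sq (continuous_oscWeight z).measurable (A := |z| + 1) (B := 1) fun t => by
    nlinarith [abs_oscWeight_le z t, sq_nonneg (|t| - 1), sq_abs t]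

theorem integrableOn_deriv_oscWeight_mul_sq (h : MemB1 φ) (z : ℝ) :
    IntegrableOn (fun t => oscWeightDeriv z t * φ t ^ 2
      + 2 * (oscWeight z t * φ t * deriv φ t)) (Ioi 0) :=
  (h.integrableOn_mul_sq (measurable_oscWeightDeriv z) (A := 1) (B := 0)
    fun t => by simpa using abs_oscWeightDeriv_le z t).add
    ((h.integrableOn_mul_mul_deriv (continuous_oscWeight z).measurable (A := |z|) (B := 1)
      fun t => by simpa using abs_oscWeight_le z t).const_mul 2)

theorem integral_deriv_oscWeight_mul_sq (h : MemB1 φ) (z : ℝ) :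
    ∫ t in Ioi 0, (oscWeightDeriv z t * φ t ^ 2 + 2 * (oscWeight z t * φ t * deriv φ t))
      = -(oscWeight z 0 * φ 0 ^ 2) :=
  integral_Ioi_eq_neg_of_hasDerivAt_off_countable (countable_singleton (z / 2))
    bddAbove_singleton ((continuous_oscWeight z).continuousOn.mul (h.continuousOn.pow 2))
    (fun t ht => ((hasDerivAt_oscWeight ht.2).mul ((h.hasDerivAt ht.1).pow 2)).congr_deriv
      (by simp only [Pi.pow_apply, Nat.cast_ofNat]; ring))
    (h.integrableOn_deriv_oscWeight_mul_sq z) (h.integrableOn_oscWeight_mul_sq z)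

theorem integral_sq_le (h : MemB1 φ) (z : ℝ) :
    ∫ t in Ioi 0, φ t ^ 2 ≤ (∫ t in Ioi 0, deriv φ t ^ 2)
      + (∫ t in Ioi 0, (t - z) ^ 2 * φ t ^ 2) + 2 * ∫ t in Ioo 0 (z / 2), φ t ^ 2 := by
  have hK := h.integrableOn_deriv_sq
  have hW := h.integrableOn_potential z
  have hI : IntegrableOn ((Ioo 0 (z / 2)).indicator fun t => φ t ^ 2) (Ioi 0) :=
    h.integrableOn_sq.indicator measurableSet_Ioo
  have hKW : IntegrableOn (fun t => deriv φ t ^ 2 + (t - z) ^ 2 * φ t ^ 2) (Ioi 0) := hK.add hW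
  have hKWA : IntegrableOn (fun t => deriv φ t ^ 2 + (t - z) ^ 2 * φ t ^ 2 - φ t ^ 2) (Ioi 0) :=
    hKW.sub h.integrableOn_sq
  have hKWAI : IntegrableOn (fun t => deriv φ t ^ 2 + (t - z) ^ 2 * φ t ^ 2 - φ t ^ 2
      + 2 * (Ioo 0 (z / 2)).indicator (fun t => φ t ^ 2) t) (Ioi 0) :=
    hKWA.add (hI.const_mul 2)
  have hint := setIntegral_nonneg (μ := volume) measurableSet_Ioi
    fun _ ht => oscillator_integrand_nonneg φ z (mem_Ioi.1 ht)
  rw [integral_add hKWAI (h.integrableOn_deriv_oscWeight_mul_sq z),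
    integral_add hKWA (hI.const_mul 2), integral_sub hKW h.integrableOn_sq, integral_add hK hW,
    integral_const_mul, setIntegral_indicator measurableSet_Ioo,
    inter_eq_right.2 Ioo_subset_Ioi_self, h.integral_deriv_oscWeight_mul_sq z] at hint
  linarith [mul_nonneg (oscWeight_zero_nonneg z) (sq_nonneg (φ 0))]

theorem integral_Ioo_sq_le (h : MemB1 φ) {z : ℝ} (hz : 0 < z) :
    ∫ t in Ioo 0 (z / 2), φ t ^ 2 ≤ 4 / z ^ 2 * ∫ t in Ioi 0, (t - z) ^ 2 * φ t ^ 2 := by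
  have hW : IntegrableOn (fun t => 4 / z ^ 2 * ((t - z) ^ 2 * φ t ^ 2)) (Ioi 0) :=
    (h.integrableOn_potential z).const_mul _
  calc ∫ t in Ioo 0 (z / 2), φ t ^ 2
      ≤ ∫ t in Ioo 0 (z / 2), 4 / z ^ 2 * ((t - z) ^ 2 * φ t ^ 2) := by
        refine setIntegral_mono_on (h.integrableOn_sq.mono_set Ioo_subset_Ioi_self)
          (hW.mono_set Ioo_subset_Ioi_self) measurableSet_Ioo fun t ht => ?_
        have hfar : 1 ≤ 4 / z ^ 2 * (t - z) ^ 2 := by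
          rw [div_mul_eq_mul_div, le_div_iff₀ (by positivity)]
          nlinarith [ht.2]
        nlinarith [mul_le_mul_of_nonneg_right hfar (sq_nonneg (φ t))]
    _ ≤ ∫ t in Ioi 0, 4 / z ^ 2 * ((t - z) ^ 2 * φ t ^ 2) :=
        setIntegral_mono_set hW (ae_of_all _ fun t => by positivity)
          (Eventually.of_forall Ioo_subset_Ioi_self)
    _ = 4 / z ^ 2 * ∫ t in Ioi 0, (t - z) ^ 2 * φ t ^ 2 := integral_const_mul _ _

end MemB1

section Localization

variable {φ : ℝ → ℝ} {z lam : ℝ}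

theorem neg_two_mul_integral_Ioo_le_glf (h : MemB1 φ) (hlam0 : 0 < lam) (hlam1 : lam ≤ 1) :
    -(2 * ∫ t in Ioo 0 (z / 2), φ t ^ 2) ≤ GLF z lam φ := by
  have hI : 0 ≤ ∫ t in Ioo 0 (z / 2), φ t ^ 2 :=
    setIntegral_nonneg measurableSet_Ioo fun t _ => sq_nonneg _
  by_cases hq : IntegrableOn (fun t => φ t ^ 4) (Ioi 0)
  · have hA : 0 ≤ ∫ t in Ioi 0, φ t ^ 2 :=
      setIntegral_nonneg measurableSet_Ioi fun t _ => sq_nonneg _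
    have hQ : 0 ≤ ∫ t in Ioi 0, φ t ^ 4 :=
      setIntegral_nonneg measurableSet_Ioi fun t _ => by positivity
    rw [glf_eq h hq]
    nlinarith [h.integral_sq_le z]
  · rw [glf_eq_zero h hlam0.ne' hq]
    linarith

theorem einf_nonneg_of_nonpos (hlam0 : 0 < lam) (hlam1 : lam ≤ 1) (hz : z ≤ 0) :
    0 ≤ Einf lam z :=
  le_einf fun φ h => by
    simpa [Ioo_eq_empty (by linarith : ¬ (0 : ℝ) < z / 2)] using
      neg_two_mul_integral_Ioo_le_glf (z := z) h hlam0 hlam1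

theorem neg_le_glf_of_pos (h : MemB1 φ) (hlam0 : 0 < lam) (hlam1 : lam ≤ 1) (hz : 0 < z) :
    -(72 / z ^ 2) ≤ GLF z lam φ := by
  rcases lt_or_ge (GLF z lam φ) 0 with hneg | hnonneg
  · have h4 : 4 / z ^ 2 * ∫ t in Ioi 0, (t - z) ^ 2 * φ t ^ 2 ≤ 4 / z ^ 2 * 9 :=
      mul_le_mul_of_nonneg_left (potential_le_of_glf_neg h hlam0 hlam1 hneg) (by positivity)
    linarith [neg_two_mul_integral_Ioo_le_glf (z := z) h hlam0 hlam1, h.integral_Ioo_sq_le hz,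
      show 2 * (4 / z ^ 2 * 9) = 72 / z ^ 2 by ring]
  · exact (neg_nonpos.2 (by positivity)).trans hnonneg

theorem tendsto_einf_atTop (hlam0 : 0 < lam) (hlam1 : lam ≤ 1) :
    Tendsto (Einf lam) atTop (𝓝 0) := by
  have hlow : Tendsto (fun z : ℝ => -(72 / z ^ 2)) atTop (𝓝 0) := by
    simpa using ((tendsto_const_nhds (x := (72 : ℝ))).div_atTop
      (tendsto_pow_atTop (α := ℝ) two_ne_zero)).neg
  refine tendsto_of_tendsto_of_tendsto_of_le_of_le' hlow tendsto_const_nhds ?_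
    (Eventually.of_forall fun z => einf_nonpos hlam0 hlam1)
  filter_upwards [eventually_gt_atTop 0] with z hz
  exact le_einf fun φ h => neg_le_glf_of_pos h hlam0 hlam1 hz

end Localization

/-- for `0 < λ ≤ 1`, the function `z ↦ E(z,λ)` attains its infimum
over `ℝ` at some point `ζ(λ) > 0`. -/
theorem zeta_exists (lam : ℝ) (hlam0 : 0 < lam) (hlam1 : lam ≤ 1) :
    ∃ ζ : ℝ, 0 < ζ ∧ ∀ z : ℝ, Einf lam ζ ≤ Einf lam z :=
  exists_pos_forall_le_of_tendsto_atTop (continuous_einf hlam0 hlam1)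
    (fun _ => einf_nonpos hlam0 hlam1) (fun _ hz => einf_nonneg_of_nonpos hlam0 hlam1 hz)
    (tendsto_einf_atTop hlam0 hlam1)
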